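/- Pushforward construction for linear models: let l : ℝ × ℝ → ℝ be differentiable in its first argument with partial derivative l', let w ∈ ℝ^d, and for (x,y) ∈ ℝ^d × ℝ set g(x,y) = l'(⟨w,x⟩, y)·x. Let μ be a finitely supported probability measure on ℝ^d × ℝ with c := ⟨w, g(μ)⟩ ≠ 0, let λ ∈ [0,1], and suppose ν is a finitely supported probability measure on ℝ^d × ℝ satisfying (1−λ)·c + λ·E_{(x,y)∼ν}[⟨w,x⟩·l'(⟨w,x⟩, y)] = 0. Define T(x,y) = ((⟨w,x⟩/c)·g(μ), y) and let ν̃ = T_#ν be the pushforward of ν under T. Then (1−λ)·g(μ) + λ·g(ν̃) = 0. -/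
import Mathlib


open scoped RealInnerProductSpace BigOperators

/-- A finitely supported probability measure, represented as a finitely supported
weight function which is nonnegative and sums to 1. -/
def IsFinProb {Z : Type*} (p : Z →₀ ℝ) : Prop :=
  (∀ z, 0 ≤ p z) ∧ p.sum (fun _ w => w) = 1

/-- Expectation `E_{z ∼ p}[g z]` of a vector-valued map under a finitely supported measure. -/
noncomputable def expect {Z E : Type*} [AddCommMonoid E] [Module ℝ E]
    (p : Z →₀ ℝ) (g : Z → E) : E :=
  p.sum fun z w => w • g z

/-- Pointwise gradient `g(x,y) = l'(⟨w,x⟩, y)·x` of the linear-model loss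
`ℓ((x,y); w) = l(⟨w,x⟩, y)`. -/
noncomputable def glin {d : ℕ} (l' : ℝ → ℝ → ℝ) (w : EuclideanSpace ℝ (Fin d))
    (p : EuclideanSpace ℝ (Fin d) × ℝ) : EuclideanSpace ℝ (Fin d)  :=
  l' ⟪w, p.1⟫ p.2 • p.1

/-- pushforward construction for linear models. If a distribution ν
solves the scalar cancellation equation, then the pushforward
`ν̃ = T_#ν` under `T(x,y) = ((⟨w,x⟩/c)·g(μ), y)` solves the vector one. -/
theorem stmt12 {d : ℕ} (l : ℝ → ℝ → ℝ) (l' : ℝ → ℝ → ℝ)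
    (hl : ∀ (t y : ℝ), HasDerivAt (fun s => l s y) (l' t y) t)
    (w : EuclideanSpace ℝ (Fin d))
    (μ : (EuclideanSpace ℝ (Fin d) × ℝ) →₀ ℝ) (hμ : IsFinProb μ)
    (hc : ⟪w, expect μ (glin l' w)⟫ ≠ 0)
    (lam : ℝ) (h0 : 0 ≤ lam) (h1 : lam ≤ 1)
    (ν : (EuclideanSpace ℝ (Fin d) × ℝ) →₀ ℝ) (hν : IsFinProb ν)
    (heq : (1 - lam) * ⟪w, expect μ (glin l' w)⟫ +
      lam * expect ν (fun p => ⟪w, p.1⟫ * l' ⟪w, p.1⟫ p.2) = 0) :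
    (1 - lam) • expect μ (glin l' w) +
      lam • expect
        (Finsupp.mapDomain
          (fun p : EuclideanSpace ℝ (Fin d) × ℝ =>
            ((⟪w, p.1⟫ / ⟪w, expect μ (glin l' w)⟫) • expect μ (glin l' w), p.2))
          ν)
        (glin l' w) = 0 := by
  set G := expect μ (glin l' w) with hG
  set c : ℝ := ⟪w, G⟫ with hcdef
  have hmap : expect (Finsupp.mapDomain (fun p : EuclideanSpace ℝ (Fin d) × ℝ =>
      ((⟪w, p.1⟫ / c) • G, p.2)) ν) (glin l' w)
      = expect ν (fun p => glin l' w ((⟪w, p.1⟫ / c) • G, p.2)) := by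
    unfold expect
    rw [Finsupp.sum_mapDomain_index]
    · intro b; simp
    · intro b m₁ m₂; rw [add_smul]
  rw [hmap]
  have hinner : ∀ p : EuclideanSpace ℝ (Fin d) × ℝ,
      (⟪w, (⟪w, p.1⟫ / c) • G⟫ : ℝ) = ⟪w, p.1⟫ := by
    intro p
    rw [real_inner_smul_right, ← hcdef]
    field_simp
  have hglin : ∀ p : EuclideanSpace ℝ (Fin d) × ℝ,
      glin l' w ((⟪w, p.1⟫ / c) • G, p.2)
        = ((⟪w, p.1⟫ * l' ⟪w, p.1⟫ p.2) / c) • G := by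
    intro p
    simp only [glin, hinner, smul_smul]
    ring_nf
  simp only [hglin]
  have key : ∀ {E : Type} [AddCommGroup E] [Module ℝ E] (V : E)
      (f : (EuclideanSpace ℝ (Fin d) × ℝ) → ℝ),
      expect ν (fun p => f p • V) = (expect ν f) • V := by
    intro E _ _ V f
    unfold expect Finsupp.sum
    rw [Finset.sum_smul]
    refine Finset.sum_congr rfl fun p _ => ?_
    simp [smul_smul]
  have this1 : expect ν (fun p => ((⟪w, p.1⟫ * l' ⟪w, p.1⟫ p.2) / c) • G)
      = (expect ν (fun p => ⟪w, p.1⟫ * l' ⟪w, p.1⟫ p.2) / c) • G := by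
    rw [key]
    congr 1
    simp only [div_eq_mul_inv]
    simpa [smul_eq_mul] using key (c⁻¹ : ℝ) (fun p => ⟪w, p.1⟫ * l' ⟪w, p.1⟫ p.2)
  rw [this1, smul_smul, ← add_smul]
  have hz : (1 - lam) + lam * (expect ν (fun p => ⟪w, p.1⟫ * l' ⟪w, p.1⟫ p.2) / c) = 0 := by
    generalize hE : expect ν (fun p => ⟪w, p.1⟫ * l' ⟪w, p.1⟫ p.2) = E at heq ⊢
    field_simp
    linarith [heq]
  rw [hz, zero_smul]
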